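/- arXiv:1011.6617 — 4 statements merged into one kernel-verified Lean document; each statement's English description precedes it below -/
import Mathlib

section
/- Let u : ℝ^n → [−1,1] be a Lipschitz continuous Q-minimizer of the energy E. Then there exists a constant C* > 0, depending only on n, Q, p, the constant C₀ in the potential bounds, and the Lipschitz constant of u, such that E_{R,x₀}(u) ≤ C* R^{n−1} for every x₀ in the closure of ℝ^n_+ and every R ≥ 1. -/
open MeasureTheory Set Metric

/-- The open half-space `{x : xₙ > 0}` of `ℝⁿ` (last coordinate positive). -/
def upperHalfSpace (n : ℕ) (hn : 0 < n) : Set (EuclideanSpace ℝ (Fin n)) :=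
  {x | 0 < x ⟨n - 1, Nat.sub_lt hn one_pos⟩}

/-- The hyperplane `{x : xₙ = 0}` of `ℝⁿ` (last coordinate zero). -/
def bottomHyperplane (n : ℕ) (hn : 0 < n) : Set (EuclideanSpace ℝ (Fin n)) :=
  {x | x ⟨n - 1, Nat.sub_lt hn one_pos⟩ = 0}

/-- The energy `E_Ω(u) = ∫_{Ω ∩ ℝⁿ₊} (|∇u|^p + F(u)) dx + ∫_{Ω ∩ {xₙ=0}} G(u) dH^{n-1}`. -/
noncomputable def energyE (n : ℕ) (hn : 0 < n) (p : ℝ) (F G : ℝ → ℝ)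
    (Ω : Set (EuclideanSpace ℝ (Fin n))) (u : EuclideanSpace ℝ (Fin n) → ℝ) : ℝ :=
  (∫ x in Ω ∩ upperHalfSpace n hn, (‖fderiv ℝ u x‖ ^ p + F (u x))) +
  (∫ x in Ω ∩ bottomHyperplane n hn, G (u x) ∂(μH[(n - 1 : ℕ)]))

/-- `u` is a `Q`-minimizer of the energy: for every bounded open `Ω` and every Lipschitz
perturbation `φ` supported in `Ω` with `u + φ` taking values in `[-1,1]`,
`E_Ω(u) ≤ Q · E_Ω(u + φ)`. -/
def IsQMinimizer (n : ℕ) (hn : 0 < n) (p Q : ℝ) (F G : ℝ → ℝ)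
    (u : EuclideanSpace ℝ (Fin n) → ℝ) : Prop :=
  ∀ Ω : Set (EuclideanSpace ℝ (Fin n)), IsOpen Ω → Bornology.IsBounded Ω →
    ∀ φ : EuclideanSpace ℝ (Fin n) → ℝ, (∃ K, LipschitzWith K φ) →
      Function.support φ ⊆ Ω → (∀ x, u x + φ x ∈ Icc (-1 : ℝ) 1) →
      energyE n hn p F G Ω u ≤ Q * energyE n hn p F G Ω (fun x => u x + φ x)

/-- The double-well potential bounds: `max(F τ, G τ) ≤ C₀ (1-τ²)^p` and
`F τ ≥ (1-τ²)^p / C₀` for `τ ∈ [-1,1]`. -/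
def PotentialBounds (p C₀ : ℝ) (F G : ℝ → ℝ) : Prop :=
  ∀ τ ∈ Icc (-1 : ℝ) 1,
    max (F τ) (G τ) ≤ C₀ * (1 - τ ^ 2) ^ p ∧ (1 - τ ^ 2) ^ p / C₀ ≤ F τ

/-!
Compare `u` with the competitor `v = max (-1) (min u ψ)`, where `ψ` rises with slope `2` from `-1`
to `1` across the shell `R ≤ |x - x₀| ≤ R + 1`. Then `v = -1` on `B_R(x₀)`, where its bulk energy
density vanishes because `F (-1) = 0`, and `v = u` outside `B_{R+1}(x₀)`, so `Q`-minimality on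
`B_{R+2}(x₀)` gives `E_R(u) ≤ E_{R+2}(u) ≤ Q E_{R+2}(v)`. The energy of `v` is at most a constant
times the volume of the annulus `B_{R+2} \ B_R` plus the `(n-1)`-measure of the flat boundary in
`B_{R+2}`, and both are `O(R^{n-1})` for `R ≥ 1`.
-/

open Bornology Module
open scoped ENNReal NNReal

section Competitor

variable {X : Type*} [PseudoMetricSpace X] {u : X → ℝ} {x₀ x : X} {R : ℝ}

def competitor (u : X → ℝ) (x₀ : X) (R : ℝ) (x : X) : ℝ :=
  max (-1) (min (u x) (2 * (dist x x₀ - R) - 1))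

lemma competitor_eq_neg_one (hx : x ∈ ball x₀ R) : competitor u x₀ R x = -1 := by
  have : 2 * (dist x x₀ - R) - 1 < -1 := by linarith [mem_ball.mp hx]
  exact max_eq_left ((min_le_right _ _).trans this.le)

lemma competitor_eq_self (hu : u x ∈ Icc (-1) 1) (hx : R + 1 ≤ dist x x₀) :
    competitor u x₀ R x = u x := by
  rw [competitor, min_eq_left (by linarith [hu.2]), max_eq_right hu.1]

lemma competitor_mem_Icc (hu : u x ≤ 1) : competitor u x₀ R x ∈ Icc (-1) 1 :=
  ⟨le_max_left _ _, max_le (by norm_num) ((min_le_left _ _).trans hu)⟩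

lemma lipschitzWith_competitor {K : ℝ≥0} (hu : LipschitzWith K u) :
    LipschitzWith (max K 2) (competitor u x₀ R) := by
  have hψ : LipschitzWith 2 fun x => 2 * (dist x x₀ - R) - 1 :=
    LipschitzWith.of_dist_le_mul fun x y => by
      rw [Real.dist_eq, show 2 * (dist x x₀ - R) - 1 - (2 * (dist y x₀ - R) - 1)
        = 2 * (dist x x₀ - dist y x₀) by ring, abs_mul, abs_two]
      push_cast
      gcongr
      exact abs_dist_sub_le x y x₀
  exact (hu.min hψ).const_max (-1)

lemma support_competitor_sub_subset (hu : ∀ x, u x ∈ Icc (-1) 1) :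
    Function.support (fun x => competitor u x₀ R x - u x) ⊆ ball x₀ (R + 2) := by
  intro x hx
  by_contra hout
  have : R + 1 ≤ dist x x₀ := by linarith [not_lt.mp (mt mem_ball.mpr hout)]
  exact hx (sub_eq_zero.mpr (competitor_eq_self (hu x) this))

end Competitor

section Annulus

variable {E : Type*} [NormedAddCommGroup E] [NormedSpace ℝ E] [MeasurableSpace E] [BorelSpace E]
  [FiniteDimensional ℝ E] [Nontrivial E] (μ : Measure E) [μ.IsAddHaarMeasure]

lemma addHaar_real_ball_sdiff_ball (x : E) {r s : ℝ} (hr : 0 ≤ r) (hrs : r ≤ s) :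
    μ.real (ball x s \ ball x r) = (s ^ finrank ℝ E - r ^ finrank ℝ E) * μ.real (ball 0 1) := by
  rw [measureReal_sdiff (ball_subset_ball hrs) measurableSet_ball measure_ball_lt_top.ne,
    measureReal_def, measureReal_def, Measure.addHaar_ball μ x (hr.trans hrs),
    Measure.addHaar_ball μ x hr, ENNReal.toReal_mul, ENNReal.toReal_mul,
    ENNReal.toReal_ofReal (pow_nonneg (hr.trans hrs) _), ENNReal.toReal_ofReal (pow_nonneg hr _),
    ← sub_mul, ← measureReal_def]

lemma addHaar_real_ball_add_sdiff_ball_le (x : E) {r a : ℝ} (hr : 0 ≤ r) (ha : 0 ≤ a) :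
    μ.real (ball x (r + a) \ ball x r) ≤
      a * finrank ℝ E * (r + a) ^ (finrank ℝ E - 1) * μ.real (ball 0 1) := by
  rw [addHaar_real_ball_sdiff_ball μ x hr (le_add_of_nonneg_right ha)]
  gcongr
  calc (r + a) ^ finrank ℝ E - r ^ finrank ℝ E
      ≤ |(r + a) ^ finrank ℝ E - r ^ finrank ℝ E| := le_abs_self _
    _ ≤ |r + a - r| * finrank ℝ E * max |r + a| |r| ^ (finrank ℝ E - 1) := abs_pow_sub_pow_le ..
    _ = a * finrank ℝ E * (r + a) ^ (finrank ℝ E - 1) := by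
      rw [add_sub_cancel_left, abs_of_nonneg ha, abs_of_nonneg hr,
        abs_of_nonneg (add_nonneg hr ha), max_eq_left (by linarith)]

end Annulus

section HalfSpace

variable {n : ℕ} (hn : 0 < n)

lemma measurableSet_upperHalfSpace : MeasurableSet (upperHalfSpace n hn) :=
  (isOpen_lt continuous_const (by fun_prop)).measurableSet

/-- The hyperplane is covered by the zero extension of `ℝⁿ⁻¹` with the sup metric, which is
`√n`-Lipschitz into `ℝⁿ`; and `μH[n-1]` is Lebesgue measure on `ℝⁿ⁻¹` with the sup metric. -/
lemma hausdorffMeasure_ball_inter_bottomHyperplane_le (x₀ : EuclideanSpace ℝ (Fin n)) {ρ : ℝ}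
    (hρ : 0 ≤ ρ) :
    μH[(n - 1 : ℕ)] (ball x₀ ρ ∩ bottomHyperplane n hn) ≤
      ENNReal.ofReal ((2 * √n * ρ) ^ (n - 1)) := by
  set m := n - 1
  let extend : (Fin m → ℝ) → (Fin n → ℝ) := fun y j => if h : (j : ℕ) < m then y ⟨j, h⟩ else 0
  have hextend : LipschitzWith 1 extend := LipschitzWith.of_dist_le_mul fun y y' => by
    rw [NNReal.coe_one, one_mul, dist_pi_le_iff dist_nonneg]
    intro j
    by_cases h : (j : ℕ) < m
    · simpa [extend, h] using dist_le_pi_dist y y' ⟨j, h⟩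
    · simp [extend, h]
  have hf : LipschitzWith (NNReal.sqrt n) (WithLp.toLp 2 ∘ extend) := by
    simpa [NNReal.sqrt_eq_rpow] using (PiLp.lipschitzWith_toLp 2 fun _ : Fin n => ℝ).comp hextend
  have hsub : ball x₀ ρ ∩ bottomHyperplane n hn ⊆
      (WithLp.toLp 2 ∘ extend) '' closedBall (fun i => x₀ (Fin.castLE (by omega) i)) ρ := by
    rintro z ⟨hz, hz0⟩
    refine ⟨fun i => z (Fin.castLE (by omega) i), (dist_pi_le_iff hρ).mpr fun i => ?_, ?_⟩
    · exact (PiLp.dist_apply_le _ _ _).trans (mem_ball.mp hz).le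
    · ext j
      by_cases h : (j : ℕ) < m
      · simp [extend, h]
      · have : j = ⟨n - 1, Nat.sub_lt hn one_pos⟩ := Fin.ext (by simp only; omega)
        simp [extend, this, hz0.symm]
  calc μH[(m : ℝ)] (ball x₀ ρ ∩ bottomHyperplane n hn)
      ≤ μH[(m : ℝ)] ((WithLp.toLp 2 ∘ extend) '' closedBall _ ρ) := measure_mono hsub
    _ ≤ (NNReal.sqrt n : ℝ≥0∞) ^ (m : ℝ) * μH[(m : ℝ)] (closedBall _ ρ) :=
      hf.hausdorffMeasure_image_le (Nat.cast_nonneg m) _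
    _ = ENNReal.ofReal ((2 * √n * ρ) ^ m) := by
      have : (m : ℝ) = Fintype.card (Fin m) := by simp
      rw [this, hausdorffMeasure_pi_real, Real.volume_pi_closedBall _ hρ, ENNReal.rpow_natCast,
        Fintype.card_fin, ← ENNReal.ofReal_coe_nnreal, Real.coe_sqrt, NNReal.coe_natCast,
        ← ENNReal.ofReal_pow (by positivity), ← ENNReal.ofReal_mul (by positivity)]
      ring_nf

lemma hausdorffMeasure_inter_bottomHyperplane_lt_top {Ω : Set (EuclideanSpace ℝ (Fin n))}
    (hΩ : IsBounded Ω) : μH[(n - 1 : ℕ)] (Ω ∩ bottomHyperplane n hn) < ∞ := by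
  obtain ⟨ρ, hρ, hΩρ⟩ := hΩ.subset_ball_lt 0 0
  calc μH[(n - 1 : ℕ)] (Ω ∩ bottomHyperplane n hn)
      ≤ μH[(n - 1 : ℕ)] (ball 0 ρ ∩ bottomHyperplane n hn) :=
        measure_mono (inter_subset_inter_left _ hΩρ)
    _ ≤ ENNReal.ofReal ((2 * √n * ρ) ^ (n - 1)) :=
        hausdorffMeasure_ball_inter_bottomHyperplane_le hn 0 hρ.le
    _ < ∞ := ENNReal.ofReal_lt_top

end HalfSpace

section Potential

variable {p C₀ : ℝ} {F G : ℝ → ℝ}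

lemma PotentialBounds.max_le (hFG : PotentialBounds p C₀ F G) (hp : 0 ≤ p) (hC₀ : 0 ≤ C₀)
    {τ : ℝ} (hτ : τ ∈ Icc (-1 : ℝ) 1) : max (F τ) (G τ) ≤ C₀ := by
  have h₀ : 0 ≤ 1 - τ ^ 2 := by nlinarith [hτ.1, hτ.2]
  have h₁ : 1 - τ ^ 2 ≤ 1 := by nlinarith
  exact (hFG τ hτ).1.trans (mul_le_of_le_one_right hC₀ (Real.rpow_le_one h₀ h₁ hp))

lemma PotentialBounds.apply_neg_one (hFG : PotentialBounds p C₀ F G) (hp : p ≠ 0)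
    (hF : 0 ≤ F (-1)) : F (-1) = 0 := by
  have := (le_max_left _ _).trans (hFG (-1) (by norm_num)).1
  norm_num [Real.zero_rpow hp] at this
  exact le_antisymm this hF

end Potential

lemma Continuous.exists_norm_comp_le {α β γ : Type*} [TopologicalSpace β]
    [SeminormedAddCommGroup γ] {F : β → γ} (hF : Continuous F) {s : Set β} (hs : IsCompact s)
    {u : α → β} (hu : ∀ x, u x ∈ s) : ∃ C, ∀ x, ‖F (u x)‖ ≤ C := by
  obtain ⟨C, hC⟩ := hs.exists_bound_of_continuousOn hF.continuousOn
  exact ⟨C, fun x => hC _ (hu x)⟩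

section Density

variable {E : Type*} [NormedAddCommGroup E] [NormedSpace ℝ E] {p C : ℝ} {F : ℝ → ℝ}
  {u : E → ℝ} {K : ℝ≥0}

noncomputable def energyDensity (p : ℝ) (F : ℝ → ℝ) (u : E → ℝ) (x : E) : ℝ :=
  ‖fderiv ℝ u x‖ ^ p + F (u x)

lemma energyDensity_nonneg (hF : ∀ τ, 0 ≤ F τ) (x : E) : 0 ≤ energyDensity p F u x :=
  add_nonneg (Real.rpow_nonneg (norm_nonneg _) p) (hF _)

lemma energyDensity_le (hp : 0 ≤ p) (hu : LipschitzWith K u) (hF : ∀ x, F (u x) ≤ C) (x : E) :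
    energyDensity p F u x ≤ K ^ p + C :=
  add_le_add (Real.rpow_le_rpow (norm_nonneg _) (norm_fderiv_le_of_lipschitz ℝ hu) hp) (hF x)

lemma energyDensity_eq_zero_of_eventuallyEq {x : E} {c : ℝ} (hp : p ≠ 0)
    (hu : u =ᶠ[nhds x] fun _ => c) (hF : F c = 0) : energyDensity p F u x = 0 := by
  rw [energyDensity, hu.fderiv_eq, fderiv_const_apply, norm_zero, Real.zero_rpow hp, hu.eq_of_nhds,
    hF, add_zero]

lemma integrableOn_energyDensity [MeasurableSpace E] [OpensMeasurableSpace E]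
    [SecondCountableTopology E] (hp : 0 ≤ p) (hF : Continuous F) (hu : LipschitzWith K u)
    (hu1 : ∀ x, u x ∈ Icc (-1 : ℝ) 1) {μ : Measure E} {s : Set E} (hs : μ s ≠ ∞) :
    IntegrableOn (energyDensity p F u) s μ := by
  obtain ⟨C, hC⟩ := hF.exists_norm_comp_le isCompact_Icc hu1
  have hmeas : Measurable (energyDensity p F u) :=
    ((measurable_fderiv ℝ u).norm.pow_const p).add (hF.measurable.comp hu.continuous.measurable)
  refine Measure.integrableOn_of_bounded hs hmeas.aestronglyMeasurable (M := K ^ p + C)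
    (ae_of_all _ fun x => ?_)
  calc ‖energyDensity p F u x‖ ≤ ‖‖fderiv ℝ u x‖ ^ p‖ + ‖F (u x)‖ := norm_add_le _ _
    _ ≤ K ^ p + C := by
      rw [Real.norm_of_nonneg (Real.rpow_nonneg (norm_nonneg _) p)]
      exact add_le_add (Real.rpow_le_rpow (norm_nonneg _) (norm_fderiv_le_of_lipschitz ℝ hu) hp)
        (hC x)

end Density

section Energy

variable {n : ℕ} (hn : 0 < n) {p Q C₀ : ℝ} {F G : ℝ → ℝ} {u : EuclideanSpace ℝ (Fin n) → ℝ}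
  {K : ℝ≥0}

lemma energyE_eq (Ω : Set (EuclideanSpace ℝ (Fin n))) :
    energyE n hn p F G Ω u = (∫ x in Ω ∩ upperHalfSpace n hn, energyDensity p F u x) +
      ∫ x in Ω ∩ bottomHyperplane n hn, G (u x) ∂μH[(n - 1 : ℕ)] :=
  rfl

lemma energyE_mono (hp : 0 ≤ p) (hFc : Continuous F) (hGc : Continuous G)
    (hF0 : ∀ τ, 0 ≤ F τ) (hG0 : ∀ τ, 0 ≤ G τ) (hu : LipschitzWith K u)
    (hu1 : ∀ x, u x ∈ Icc (-1 : ℝ) 1) {Ω Ω' : Set (EuclideanSpace ℝ (Fin n))} (hΩ : Ω ⊆ Ω')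
    (hΩ' : IsBounded Ω') : energyE n hn p F G Ω u ≤ energyE n hn p F G Ω' u := by
  obtain ⟨C, hC⟩ := hGc.exists_norm_comp_le isCompact_Icc hu1
  have hG_int : IntegrableOn (fun x => G (u x)) (Ω' ∩ bottomHyperplane n hn) μH[(n - 1 : ℕ)] :=
    Measure.integrableOn_of_bounded (hausdorffMeasure_inter_bottomHyperplane_lt_top hn hΩ').ne
      (hGc.comp hu.continuous).aestronglyMeasurable (ae_of_all _ hC)
  have hρ_int : IntegrableOn (energyDensity p F u) (Ω' ∩ upperHalfSpace n hn) :=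
    integrableOn_energyDensity hp hFc hu hu1 (hΩ'.subset inter_subset_left).measure_lt_top.ne
  rw [energyE_eq, energyE_eq]
  exact add_le_add
    (setIntegral_mono_set hρ_int (ae_of_all _ (energyDensity_nonneg hF0))
      (inter_subset_inter_left _ hΩ).eventuallyLE)
    (setIntegral_mono_set hG_int (ae_of_all _ fun x => hG0 _)
      (inter_subset_inter_left _ hΩ).eventuallyLE)

lemma energyE_le_of_eqOn_neg_one (hp : 0 < p) (hC₀ : 0 ≤ C₀) (hFG : PotentialBounds p C₀ F G)
    (hF0 : ∀ τ, 0 ≤ F τ) (hG0 : ∀ τ, 0 ≤ G τ) (hu : LipschitzWith K u)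
    (hu1 : ∀ x, u x ∈ Icc (-1 : ℝ) 1) {U Ω : Set (EuclideanSpace ℝ (Fin n))} (hU : IsOpen U)
    (huU : EqOn u (fun _ => -1) U) (hΩ : IsBounded Ω) (hΩm : MeasurableSet Ω) :
    energyE n hn p F G Ω u ≤
      (K ^ p + C₀) * volume.real (Ω \ U) +
        C₀ * μH[(n - 1 : ℕ)].real (Ω ∩ bottomHyperplane n hn) := by
  have hF : ∀ x, F (u x) ≤ C₀ := fun x => (le_max_left _ _).trans (hFG.max_le hp.le hC₀ (hu1 x))
  have hG : ∀ x, G (u x) ≤ C₀ := fun x => (le_max_right _ _).trans (hFG.max_le hp.le hC₀ (hu1 x))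
  have hΩU : volume ((Ω ∩ upperHalfSpace n hn) \ U) < ∞ :=
    (hΩ.subset (sdiff_subset.trans inter_subset_left)).measure_lt_top
  have hbulk : ∫ x in Ω ∩ upperHalfSpace n hn, energyDensity p F u x =
      ∫ x in (Ω ∩ upperHalfSpace n hn) \ U, energyDensity p F u x := by
    refine setIntegral_eq_of_subset_of_forall_sdiff_eq_zero
      (hΩm.inter (measurableSet_upperHalfSpace hn)) sdiff_subset fun x hx => ?_
    have hxU : x ∈ U := by_contra fun h => hx.2 ⟨hx.1, h⟩
    exact energyDensity_eq_zero_of_eventuallyEq hp.ne'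
      (huU.eventuallyEq_of_mem (hU.mem_nhds hxU)) (hFG.apply_neg_one hp.ne' (hF0 _))
  rw [energyE_eq, hbulk]
  gcongr
  · calc ∫ x in (Ω ∩ upperHalfSpace n hn) \ U, energyDensity p F u x
        ≤ (K ^ p + C₀) * volume.real ((Ω ∩ upperHalfSpace n hn) \ U) :=
          (Real.le_norm_self _).trans (norm_setIntegral_le_of_norm_le_const hΩU fun x _ => by
            rw [Real.norm_of_nonneg (energyDensity_nonneg hF0 x)]
            exact energyDensity_le hp.le hu hF x)
      _ ≤ (K ^ p + C₀) * volume.real (Ω \ U) := by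
        gcongr
        · exact (hΩ.subset sdiff_subset).measure_lt_top.ne
        · exact inter_subset_left
  · refine (Real.le_norm_self _).trans (norm_setIntegral_le_of_norm_le_const
      (hausdorffMeasure_inter_bottomHyperplane_lt_top hn hΩ) fun x _ => ?_)
    rw [Real.norm_of_nonneg (hG0 _)]
    exact hG x

lemma IsQMinimizer.energyE_le_competitor (hmin : IsQMinimizer n hn p Q F G u)
    (hu : LipschitzWith K u) (hu1 : ∀ x, u x ∈ Icc (-1 : ℝ) 1) (x₀ : EuclideanSpace ℝ (Fin n))
    (R : ℝ) :
    energyE n hn p F G (ball x₀ (R + 2)) u ≤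
      Q * energyE n hn p F G (ball x₀ (R + 2)) (competitor u x₀ R) := by
  simpa only [add_sub_cancel] using hmin (ball x₀ (R + 2)) isOpen_ball isBounded_ball
    (fun x => competitor u x₀ R x - u x) ⟨_, (lipschitzWith_competitor hu).sub hu⟩
    (support_competitor_sub_subset hu1) fun x => by
      simpa only [add_sub_cancel] using competitor_mem_Icc (hu1 x).2

end Energy

/-- If `u` is a Lipschitz continuous `Q`-minimizer of the energy, then there
is `C* > 0`, depending only on `n, Q, p, C₀` and the Lipschitz constant of `u`, with
`E_{R,x₀}(u) ≤ C* R^{n-1}` for every `x₀` in the closure of `ℝⁿ₊` and every `R ≥ 1`. -/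
theorem statement0 (n : ℕ) (hn : 2 ≤ n) (p : ℝ) (hp : 1 < p) (Q : ℝ) (hQ : 1 ≤ Q)
    (C₀ : ℝ) (hC₀ : 1 ≤ C₀) (L : NNReal) :
    ∃ Cstar : ℝ, 0 < Cstar ∧
      ∀ F G : ℝ → ℝ, Continuous F → Continuous G →
        (∀ τ, 0 ≤ F τ) → (∀ τ, 0 ≤ G τ) → PotentialBounds p C₀ F G →
        ∀ u : EuclideanSpace ℝ (Fin n) → ℝ, LipschitzWith L u →
          (∀ x, u x ∈ Icc (-1 : ℝ) 1) →
          IsQMinimizer n (by omega) p Q F G u →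
          ∀ x₀ ∈ closure (upperHalfSpace n (by omega)), ∀ R : ℝ, 1 ≤ R →
            energyE n (by omega) p F G (ball x₀ R) u ≤ Cstar * R ^ (n - 1) := by
  have hn₀ : 0 < n := by omega
  have : Nontrivial (EuclideanSpace ℝ (Fin n)) := by
    have : Nonempty (Fin n) := ⟨⟨0, hn₀⟩⟩
    infer_instance
  set M := ((max L 2 : ℝ≥0) : ℝ) ^ p + C₀
  set ω := volume.real (ball (0 : EuclideanSpace ℝ (Fin n)) 1)
  have hω : 0 < ω := ENNReal.toReal_pos (measure_ball_pos _ _ one_pos).ne' measure_ball_lt_top.ne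
  refine ⟨Q * (M * (2 * n * 3 ^ (n - 1) * ω) + C₀ * (6 * √n) ^ (n - 1)), by positivity, ?_⟩
  intro F G hFc hGc hF0 hG0 hFG u hu hu1 hmin x₀ _ R hR
  have hannulus := addHaar_real_ball_add_sdiff_ball_le volume x₀ (by linarith : 0 ≤ R) zero_le_two
  rw [finrank_euclideanSpace_fin] at hannulus
  have hslice := ENNReal.toReal_le_of_le_ofReal (by positivity)
    (hausdorffMeasure_ball_inter_bottomHyperplane_le hn₀ x₀ (by linarith : 0 ≤ R + 2))
  calc energyE n hn₀ p F G (ball x₀ R) u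
      ≤ energyE n hn₀ p F G (ball x₀ (R + 2)) u :=
        energyE_mono hn₀ (by linarith) hFc hGc hF0 hG0 hu hu1 (ball_subset_ball (by linarith))
          isBounded_ball
    _ ≤ Q * energyE n hn₀ p F G (ball x₀ (R + 2)) (competitor u x₀ R) :=
        hmin.energyE_le_competitor hn₀ hu hu1 x₀ R
    _ ≤ Q * (M * volume.real (ball x₀ (R + 2) \ ball x₀ R) +
          C₀ * μH[(n - 1 : ℕ)].real (ball x₀ (R + 2) ∩ bottomHyperplane n hn₀)) := by
        gcongr
        exact energyE_le_of_eqOn_neg_one hn₀ (by linarith) (by linarith) hFG hF0 hG0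
          (lipschitzWith_competitor hu) (fun x => competitor_mem_Icc (hu1 x).2) isOpen_ball
          (fun x hx => competitor_eq_neg_one hx) isBounded_ball measurableSet_ball
    _ ≤ Q * (M * (2 * n * (3 * R) ^ (n - 1) * ω) + C₀ * (2 * √n * (3 * R)) ^ (n - 1)) := by
        gcongr
        · exact hannulus.trans (by gcongr; linarith)
        · exact hslice.trans (by gcongr; linarith)
    _ = Q * (M * (2 * n * 3 ^ (n - 1) * ω) + C₀ * (6 * √n) ^ (n - 1)) * R ^ (n - 1) := by ring
end

section
/- For every integer n ≥ 2 there exists a constant C = C(n) > 0 such that the following holds: for all Lipschitz functions u, v : ℝ^n → ℝ and every τ ∈ ℝ for which the set E := {x ∈ ℝ^n : u(x) > τ > v(x)} is bounded, one has L^n(E)^{(n−1)/n} ≤ C ( H^{n−1}({x : u(x) ≥ v(x)} ∩ {x : u(x) = τ}) + H^{n−1}({x : u(x) ≥ v(x)} ∩ {x : v(x) = τ}) ). -/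
/-!
The frontier of `{u > τ > v}` lies in the union of the two level sets, so it suffices to show
`|E|^{(n-1)/n} ≤ 2^{n-1} H^{n-1}(∂E)` for bounded measurable `E ⊆ ℝⁿ`; since the sup norm is
dominated by the Euclidean one, we may measure `H^{n-1}` with the sup norm. Cover `∂E` by sup-norm
balls (cubes) `B(z_k, r_k)` with `∑ r_k^{n-1}` close to `H^{n-1}(∂E)` and put
`f = ∑ (2 r_k)⁻¹ 1_{B(z_k, r_k)}`. A coordinate line through a point of `E` must leave the bounded
set `E`, so it meets `∂E` inside some cube and `f` integrates to at least `1` along it. The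
Gagliardo–Nirenberg grid-lines inequality then gives `|E|^{(n-1)/n} ≤ ∫ f = ∑ (2 r_k)^{n-1}`.
-/

open MeasureTheory Set Function Metric
open scoped ENNReal

theorem exists_update_mem_frontier {ι : Type*} [Fintype ι] [DecidableEq ι] {s : Set (ι → ℝ)}
    (hs : Bornology.IsBounded s) {y : ι → ℝ} (hy : y ∈ s) (i : ι) :
    ∃ t : ℝ, update y i t ∈ frontier s := by
  obtain ⟨R, hR⟩ := isBounded_iff_forall_norm_le.mp hs
  have hline : update y i ⁻¹' s ≠ univ := fun h => by
    have hmem : update y i (|R| + 1) ∈ s := show |R| + 1 ∈ update y i ⁻¹' s from h ▸ mem_univ _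
    have := (norm_le_pi_norm (update y i (|R| + 1)) i).trans (hR _ hmem)
    rw [update_self, Real.norm_eq_abs, abs_of_pos (by positivity)] at this
    linarith [le_abs_self R]
  obtain ⟨t, ht⟩ := nonempty_frontier_iff.mpr ⟨⟨y i, by simpa using hy⟩, hline⟩
  exact ⟨t, (continuous_const.update i continuous_id).frontier_preimage_subset s ht⟩

theorem update_preimage_closedBall {ι : Type*} [Fintype ι] [DecidableEq ι] {y z : ι → ℝ}
    {r : ℝ} {i : ι} {t₀ : ℝ} (h : update y i t₀ ∈ closedBall z r) :
    update y i ⁻¹' closedBall z r = closedBall (z i) r := by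
  have hr : 0 ≤ r := nonempty_closedBall.mp ⟨_, h⟩
  rw [closedBall_pi _ hr] at h ⊢
  ext t
  simp only [mem_preimage, mem_univ_pi] at h ⊢
  refine ⟨fun ht => by simpa using ht i, fun ht j => ?_⟩
  rcases eq_or_ne j i with rfl | hj
  · simpa using ht
  · simpa [update_of_ne hj] using h j

theorem exists_gt_ofReal_rpow_lt {a d : ℝ} {b : ℝ≥0∞}
    (h : ENNReal.ofReal a ^ d < b) : ∃ r > a, ENNReal.ofReal r ^ d < b := by
  have hcont : Continuous fun r : ℝ => ENNReal.ofReal r ^ d :=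
    ENNReal.continuous_rpow_const.comp ENNReal.continuous_ofReal
  have := (hcont.tendsto a).eventually (gt_mem_nhds h)
  exact ((this.filter_mono (nhdsWithin_le_nhds (s := Ioi a))).and self_mem_nhdsWithin).exists.imp
    fun r hr => ⟨hr.2, hr.1⟩

theorem volume_rpow_le_lintegral_of_one_le_lintegral_update {n : ℕ} (hn : 2 ≤ n)
    {s : Set (Fin n → ℝ)} (hs : MeasurableSet s) {f : (Fin n → ℝ) → ℝ≥0∞} (hf : Measurable f)
    (hline : ∀ y ∈ s, ∀ i, 1 ≤ ∫⁻ t, f (update y i t)) :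
    volume s ^ (((n : ℝ) - 1) / n) ≤ ∫⁻ x, f x := by
  have hn' : (1 : ℝ) < n := by exact_mod_cast hn
  have hp : Real.HolderConjugate (Fintype.card (Fin n)) ((n : ℝ) / (n - 1)) := by
    simpa [Real.conjExponent] using Real.HolderConjugate.conjExponent hn'
  have hvol : volume s ≤ ∫⁻ y, ∏ i, (∫⁻ t, f (update y i t)) ^
      ((1 : ℝ) / (Fintype.card (Fin n) - 1 : ℝ)) := by
    rw [← lintegral_indicator_one hs]
    refine lintegral_mono fun y => ?_
    by_cases hy : y ∈ s
    · rw [indicator_of_mem hy]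
      exact Finset.one_le_prod' fun i _ => ENNReal.one_le_rpow (hline y hy i)
        (by simpa using hn')
    · simp [indicator_of_notMem hy]
  have hGN := lintegral_prod_lintegral_pow_le (fun _ : Fin n => (volume : Measure ℝ)) hp hf
  rw [← volume_pi] at hGN
  calc volume s ^ (((n : ℝ) - 1) / n)
      ≤ ((∫⁻ x, f x) ^ ((n : ℝ) / (n - 1))) ^ (((n : ℝ) - 1) / n) := by
        gcongr; exact hvol.trans hGN
    _ = ∫⁻ x, f x := by
        rw [← ENNReal.rpow_mul, div_mul_div_cancel₀ (by linarith), div_self (by linarith),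
          ENNReal.rpow_one]

theorem volume_rpow_le_tsum_of_frontier_subset_iUnion_closedBall {n : ℕ} (hn : 2 ≤ n)
    {s : Set (Fin n → ℝ)} (hs : MeasurableSet s) (hsb : Bornology.IsBounded s)
    {z : ℕ → Fin n → ℝ} {r : ℕ → ℝ} (hr : ∀ k, 0 < r k)
    (hcover : frontier s ⊆ ⋃ k, closedBall (z k) (r k)) :
    volume s ^ (((n : ℝ) - 1) / n) ≤ ∑' k, ENNReal.ofReal (2 * r k) ^ (n - 1) := by
  set F : (Fin n → ℝ) → ℝ≥0∞ := fun x =>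
    ∑' k, (closedBall (z k) (r k)).indicator (fun _ => (ENNReal.ofReal (2 * r k))⁻¹) x
  have hlen_ne_zero : ∀ k, ENNReal.ofReal (2 * r k) ≠ 0 := fun k => by
    simpa using hr k
  have hF : Measurable F :=
    .tsum fun k => measurable_const.indicator measurableSet_closedBall
  refine le_of_le_of_eq (volume_rpow_le_lintegral_of_one_le_lintegral_update hn hs hF ?_) ?_
  · intro y hy i
    obtain ⟨t₀, ht₀⟩ := exists_update_mem_frontier hsb hy i
    obtain ⟨k, hk⟩ := mem_iUnion.mp (hcover ht₀)
    set c := (ENNReal.ofReal (2 * r k))⁻¹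
    calc 1 = c * volume (closedBall (z k i) (r k)) := by
          rw [Real.volume_closedBall, ENNReal.inv_mul_cancel (hlen_ne_zero k) ENNReal.ofReal_ne_top]
      _ = ∫⁻ t, (closedBall (z k i) (r k)).indicator (fun _ => c) t :=
          (lintegral_indicator_const measurableSet_closedBall c).symm
      _ = ∫⁻ t, (closedBall (z k) (r k)).indicator (fun _ => c) (update y i t) := by
          rw [← update_preimage_closedBall hk]; rfl
      _ ≤ ∫⁻ t, F (update y i t) := lintegral_mono fun t => ENNReal.le_tsum k
  · rw [lintegral_tsum fun k => (measurable_const.indicator measurableSet_closedBall).aemeasurable]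
    refine tsum_congr fun k => ?_
    rw [lintegral_indicator_const measurableSet_closedBall, Real.volume_pi_closedBall _ (hr k).le,
      Fintype.card_fin, ENNReal.ofReal_pow (by linarith [hr k]), ← pow_sub_one_mul (by omega),
      mul_left_comm, ENNReal.inv_mul_cancel (hlen_ne_zero k) ENNReal.ofReal_ne_top, mul_one]

theorem exists_closedBall_cover_tsum_rpow_le {X : Type*} [MetricSpace X] [MeasurableSpace X]
    [BorelSpace X] [Nonempty X] {d : ℝ} (hd : 0 < d) {S : Set X} (hS : μH[d] S ≠ ⊤)
    {ε : ℝ≥0∞} (hε : ε ≠ 0) :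
    ∃ (z : ℕ → X) (r : ℕ → ℝ), (∀ k, 0 < r k) ∧ S ⊆ ⋃ k, closedBall (z k) (r k) ∧
      ∑' k, ENNReal.ofReal (r k) ^ d ≤ μH[d] S + ε := by
  obtain ⟨t, hSt, htdiam, htsum⟩ : ∃ t : ℕ → Set X, S ⊆ ⋃ k, t k ∧ (∀ k, ediam (t k) ≤ 1) ∧
      ∑' k, ⨆ _ : (t k).Nonempty, ediam (t k) ^ d < μH[d] S + ε / 2 := by
    have h := (le_iSup₂ (f := fun (r : ℝ≥0∞) (_ : 0 < r) =>
      ⨅ (t : ℕ → Set X) (_ : S ⊆ ⋃ k, t k) (_ : ∀ k, ediam (t k) ≤ r),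
        ∑' k, ⨆ _ : (t k).Nonempty, ediam (t k) ^ d) 1 zero_lt_one).trans_eq
      (Measure.hausdorffMeasure_apply d S).symm
    simpa only [iInf_lt_iff, exists_prop] using
      h.trans_lt (ENNReal.lt_add_right hS (ENNReal.half_pos hε).ne')
  obtain ⟨η, hηpos, hηsum⟩ := ENNReal.exists_pos_sum_of_countable (ENNReal.half_pos hε).ne' ℕ
  have hball : ∀ k, ∃ z : X, ∃ ρ > diam (t k), t k ⊆ closedBall z ρ ∧
      ENNReal.ofReal ρ ^ d < (⨆ _ : (t k).Nonempty, ediam (t k) ^ d) + η k := by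
    intro k
    have hfin : ediam (t k) ≠ ⊤ := ne_top_of_le_ne_top ENNReal.one_ne_top (htdiam k)
    obtain ⟨z, hz, hdiam⟩ : ∃ z, t k ⊆ closedBall z (diam (t k)) ∧
        ENNReal.ofReal (diam (t k)) ^ d ≤ ⨆ _ : (t k).Nonempty, ediam (t k) ^ d := by
      rcases (t k).eq_empty_or_nonempty with he | ⟨x, hx⟩
      · exact ⟨Classical.arbitrary X, by simp [he, ENNReal.zero_rpow_of_pos hd]⟩
      · refine ⟨x, fun y hy => dist_le_diam_of_mem' hfin hy hx, ?_⟩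
        rw [iSup_pos ⟨x, hx⟩, diam, ENNReal.ofReal_toReal hfin]
    have hlt : ENNReal.ofReal (diam (t k)) ^ d <
        (⨆ _ : (t k).Nonempty, ediam (t k) ^ d) + η k :=
      (ENNReal.lt_add_right (by simp [hd.le]) (by simpa using (hηpos k).ne')).trans_le
        (add_le_add_left hdiam _)
    obtain ⟨ρ, hρ, hρd⟩ := exists_gt_ofReal_rpow_lt hlt
    exact ⟨z, ρ, hρ, hz.trans (closedBall_subset_closedBall hρ.le), hρd⟩
  choose z r hr hcover hsum using hball
  refine ⟨z, r, fun k => diam_nonneg.trans_lt (hr k),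
    hSt.trans (iUnion_mono hcover), ?_⟩
  calc ∑' k, ENNReal.ofReal (r k) ^ d
      ≤ ∑' k, ((⨆ _ : (t k).Nonempty, ediam (t k) ^ d) + η k) :=
        ENNReal.tsum_le_tsum fun k => (hsum k).le
    _ = (∑' k, ⨆ _ : (t k).Nonempty, ediam (t k) ^ d) + ∑' k, (η k : ℝ≥0∞) := ENNReal.tsum_add
    _ ≤ (μH[d] S + ε / 2) + ε / 2 := add_le_add htsum.le hηsum.le
    _ = μH[d] S + ε := by rw [add_assoc, ENNReal.add_halves]

theorem volume_rpow_le_hausdorffMeasure_frontier_pi {n : ℕ} (hn : 2 ≤ n) {s : Set (Fin n → ℝ)}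
    (hs : MeasurableSet s) (hsb : Bornology.IsBounded s) :
    volume s ^ (((n : ℝ) - 1) / n) ≤ 2 ^ (n - 1) * μH[(n - 1 : ℕ)] (frontier s) := by
  have h2 : (2 : ℝ≥0∞) ^ (n - 1) ≠ 0 := pow_ne_zero _ two_ne_zero
  have h2' : (2 : ℝ≥0∞) ^ (n - 1) ≠ ⊤ := ENNReal.pow_ne_top ENNReal.ofNat_ne_top
  rcases eq_top_or_lt_top (μH[(n - 1 : ℕ)] (frontier s)) with hM | hM
  · simp [hM, ENNReal.mul_top h2]
  refine ENNReal.le_of_forall_pos_le_add fun ε hε _ => ?_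
  obtain ⟨z, r, hr, hcover, hsum⟩ := exists_closedBall_cover_tsum_rpow_le
    (by exact_mod_cast (by omega : 0 < n - 1)) hM.ne
    (ε := ε / 2 ^ (n - 1)) (ENNReal.div_pos (by exact_mod_cast hε.ne') h2').ne'
  calc volume s ^ (((n : ℝ) - 1) / n)
      ≤ ∑' k, ENNReal.ofReal (2 * r k) ^ (n - 1) :=
        volume_rpow_le_tsum_of_frontier_subset_iUnion_closedBall hn hs hsb hr hcover
    _ = 2 ^ (n - 1) * ∑' k, ENNReal.ofReal (r k) ^ ((n - 1 : ℕ) : ℝ) := by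
        simp only [ENNReal.rpow_natCast, ← ENNReal.tsum_mul_left, ← mul_pow,
          ENNReal.ofReal_mul zero_le_two, ENNReal.ofReal_ofNat]
    _ ≤ 2 ^ (n - 1) * (μH[(n - 1 : ℕ)] (frontier s) + ε / 2 ^ (n - 1)) := by gcongr
    _ = 2 ^ (n - 1) * μH[(n - 1 : ℕ)] (frontier s) + ε := by
        rw [mul_add, ENNReal.mul_div_cancel h2 h2']

theorem EuclideanSpace.volume_rpow_le_hausdorffMeasure_frontier {n : ℕ} (hn : 2 ≤ n)
    {E : Set (EuclideanSpace ℝ (Fin n))} (hE : MeasurableSet E) (hEb : Bornology.IsBounded E) :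
    volume E ^ (((n : ℝ) - 1) / n) ≤ 2 ^ (n - 1) * μH[(n - 1 : ℕ)] (frontier E) := by
  have hofLp : ∀ A : Set (EuclideanSpace ℝ (Fin n)), WithLp.toLp 2 ⁻¹' A = WithLp.ofLp '' A :=
    fun A => ((PiLp.homeomorph 2 _).image_eq_preimage_symm A).symm
  have hvol : volume (WithLp.toLp 2 ⁻¹' E) = volume E :=
    (PiLp.volume_preserving_toLp (Fin n)).measure_preimage hE.nullMeasurableSet
  have hfrontier : frontier (WithLp.toLp 2 ⁻¹' E) = WithLp.ofLp '' frontier E := by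
    rw [← hofLp]
    exact ((PiLp.homeomorph 2 (fun _ : Fin n => ℝ)).symm.preimage_frontier E).symm
  have hlip := PiLp.lipschitzWith_ofLp 2 (fun _ : Fin n => ℝ)
  calc volume E ^ (((n : ℝ) - 1) / n)
      = volume (WithLp.toLp 2 ⁻¹' E) ^ (((n : ℝ) - 1) / n) := by rw [hvol]
    _ ≤ 2 ^ (n - 1) * μH[(n - 1 : ℕ)] (WithLp.ofLp '' frontier E) := by
        rw [← hfrontier]
        exact volume_rpow_le_hausdorffMeasure_frontier_pi hn
          (hE.preimage (PiLp.volume_preserving_toLp (Fin n)).measurable)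
          (hofLp E ▸ hlip.isBounded_image hEb)
    _ ≤ 2 ^ (n - 1) * μH[(n - 1 : ℕ)] (frontier E) := by
        gcongr
        simpa using hlip.hausdorffMeasure_image_le (Nat.cast_nonneg _) (frontier E)

theorem frontier_setOf_gt_and_gt_subset {X : Type*} [TopologicalSpace X] {u v : X → ℝ}
    (hu : Continuous u) (hv : Continuous v) (τ : ℝ) :
    frontier {x | u x > τ ∧ τ > v x} ⊆
      ({x | v x ≤ u x} ∩ {x | u x = τ}) ∪ ({x | v x ≤ u x} ∩ {x | v x = τ}) := by
  intro x hx
  rcases frontier_inter_subset {x | τ < u x} {x | v x < τ} hx with ⟨hu', hv'⟩ | ⟨hu', hv'⟩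
  · have hux : τ = u x := frontier_lt_subset_eq continuous_const hu hu'
    have hvx : v x ≤ τ := closure_lt_subset_le hv continuous_const hv'
    exact Or.inl ⟨hvx.trans hux.le, hux.symm⟩
  · have hux : τ ≤ u x := closure_lt_subset_le continuous_const hu hu'
    have hvx : v x = τ := frontier_lt_subset_eq hv continuous_const hv'
    exact Or.inr ⟨hvx.le.trans hux, hvx⟩

/-- An isoperimetric-type inequality: there is `C = C(n) > 0` such that for
all Lipschitz `u, v : ℝⁿ → ℝ` and every `τ` for which `E := {u > τ > v}` is bounded,
`Lⁿ(E)^{(n-1)/n} ≤ C (H^{n-1}({u ≥ v} ∩ {u = τ}) + H^{n-1}({u ≥ v} ∩ {v = τ}))`. -/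
theorem statement5 (n : ℕ) (hn : 2 ≤ n) :
    ∃ C : ℝ, 0 < C ∧
      ∀ u v : EuclideanSpace ℝ (Fin n) → ℝ,
        (∃ K, LipschitzWith K u) → (∃ K, LipschitzWith K v) →
        ∀ τ : ℝ, Bornology.IsBounded {x | u x > τ ∧ τ > v x} →
          (volume {x | u x > τ ∧ τ > v x}) ^ (((n : ℝ) - 1) / n) ≤
            ENNReal.ofReal C *
              (μH[(n - 1 : ℕ)] ({x | v x ≤ u x} ∩ {x | u x = τ}) +
               μH[(n - 1 : ℕ)] ({x | v x ≤ u x} ∩ {x | v x = τ})) := by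
  refine ⟨2 ^ (n - 1), by positivity, fun u v ⟨_, hu⟩ ⟨_, hv⟩ τ hbdd => ?_⟩
  have hopen : IsOpen {x | u x > τ ∧ τ > v x} :=
    (isOpen_lt continuous_const hu.continuous).inter (isOpen_lt hv.continuous continuous_const)
  calc volume {x | u x > τ ∧ τ > v x} ^ (((n : ℝ) - 1) / n)
      ≤ 2 ^ (n - 1) * μH[(n - 1 : ℕ)] (frontier {x | u x > τ ∧ τ > v x}) :=
        EuclideanSpace.volume_rpow_le_hausdorffMeasure_frontier hn hopen.measurableSet hbdd
    _ ≤ _ := by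
        rw [ENNReal.ofReal_pow zero_le_two, ENNReal.ofReal_ofNat]
        gcongr
        exact (measure_mono (frontier_setOf_gt_and_gt_subset hu.continuous hv.continuous τ)).trans
          (measure_union_le _ _)
end

section
/- Let p > 0 and ε ∈ (0,1]. There exists a constant C_ε > 0, depending only on p and ε, such that for every R > 0 and every a ∈ ℝ with |a| ≤ R, setting ρ := √(R² − a²), one has ∫_0^ρ e^{p√(r² + a²)} dr ≤ (2ε² R + C_ε) e^{pR}. -/
/-!
Since `2R√s ≤ R² + s`, the integrand is at most `e^{pR} e^{-p(ρ² - r²)/(2R)} ≤ e^{pR}` on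
`[0, ρ]`. For any `t < ρ`, split `[0, ρ]` at `ρ - t`: the last piece is at most `t e^{pR}`, and
on `[0, ρ - t]` one has `ρ² - r² ≥ tρ`, so the first piece is at most
`ρ e^{-ptρ/(2R)} e^{pR} ≤ (2R/(pt)) e^{pR}`. The choice `t = ε²R` gives the constant `2/(pε²)`.
-/

open Real Set intervalIntegral

lemma Real.sqrt_le_sq_add_div {R s : ℝ} (hR : 0 < R) (hs : 0 ≤ s) :
    √s ≤ (R ^ 2 + s) / (2 * R) := by
  rw [le_div_iff₀ (by positivity)]
  have := two_mul_le_add_sq R (√s)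
  rw [sq_sqrt hs] at this
  linarith

lemma Real.mul_exp_neg_mul_le_inv {c : ℝ} (hc : 0 < c) (x : ℝ) : x * exp (-(c * x)) ≤ c⁻¹ := by
  calc x * exp (-(c * x)) = c⁻¹ * (c * x * exp (-(c * x))) := by field_simp
    _ ≤ c⁻¹ * exp (-1) := by gcongr; exact mul_exp_neg_le_exp_neg_one _
    _ ≤ c⁻¹ := mul_le_of_le_one_right (by positivity) (exp_le_one_iff.mpr (by norm_num))

lemma intervalIntegral.integral_le_mul_of_forall_le {f : ℝ → ℝ} {a b C : ℝ} (hab : a ≤ b)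
    (hf : IntervalIntegrable f MeasureTheory.volume a b) (h : ∀ x ∈ Icc a b, f x ≤ C) :
    ∫ x in a..b, f x ≤ (b - a) * C := by
  simpa using integral_mono_on hab hf intervalIntegrable_const h

lemma exp_mul_sqrt_sq_add_sq_le {p R a ρ r c : ℝ} (hp : 0 ≤ p) (hR : 0 < R)
    (hρ : ρ ^ 2 = R ^ 2 - a ^ 2) (hc : c ≤ ρ ^ 2 - r ^ 2) :
    exp (p * √(r ^ 2 + a ^ 2)) ≤ exp (-(p * c / (2 * R))) * exp (p * R) := by
  rw [← exp_add, exp_le_exp]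
  have hsqrt := Real.sqrt_le_sq_add_div hR (by positivity : 0 ≤ r ^ 2 + a ^ 2)
  calc p * √(r ^ 2 + a ^ 2) ≤ p * ((R ^ 2 + (r ^ 2 + a ^ 2)) / (2 * R)) := by gcongr
    _ = -(p * (ρ ^ 2 - r ^ 2) / (2 * R)) + p * R := by rw [hρ]; field_simp; ring
    _ ≤ -(p * c / (2 * R)) + p * R := by gcongr

lemma integral_exp_mul_sqrt_sq_add_sq_le {p R a t : ℝ} (hp : 0 < p) (hR : 0 < R) (ha : |a| ≤ R)
    (ht : 0 < t) :
    ∫ r in 0..√(R ^ 2 - a ^ 2), exp (p * √(r ^ 2 + a ^ 2))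
      ≤ (t + 2 * R / (p * t)) * exp (p * R) := by
  set ρ := √(R ^ 2 - a ^ 2)
  have hρ0 : 0 ≤ ρ := sqrt_nonneg _
  have hρ : ρ ^ 2 = R ^ 2 - a ^ 2 := sq_sqrt (by nlinarith [sq_abs a, abs_nonneg a])
  have hint (x y : ℝ) : IntervalIntegrable (fun r => exp (p * √(r ^ 2 + a ^ 2)))
      MeasureTheory.volume x y :=
    (by fun_prop : Continuous _).intervalIntegrable x y
  have hle_exp : ∀ r ∈ Icc 0 ρ, exp (p * √(r ^ 2 + a ^ 2)) ≤ exp (p * R) := fun r hr => by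
    simpa using exp_mul_sqrt_sq_add_sq_le (c := 0) hp.le hR hρ (by nlinarith [hr.1, hr.2])
  have hdecay_nonneg : 0 ≤ 2 * R / (p * t) * exp (p * R) := by positivity
  rcases le_or_gt ρ t with hsmall | hlarge
  · calc _ ≤ (ρ - 0) * exp (p * R) := integral_le_mul_of_forall_le hρ0 (hint _ _) hle_exp
      _ ≤ t * exp (p * R) := by gcongr; linarith
      _ ≤ _ := by rw [add_mul]; linarith
  set m := ρ - t with hm
  rw [← integral_add_adjacent_intervals (hint 0 m) (hint m ρ), add_mul]
  have hfirst : ∫ r in 0..m, exp (p * √(r ^ 2 + a ^ 2)) ≤ 2 * R / (p * t) * exp (p * R) := calc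
    _ ≤ (m - 0) * (exp (-(p * t / (2 * R) * ρ)) * exp (p * R)) := by
      refine integral_le_mul_of_forall_le (by linarith) (hint _ _) fun r hr => ?_
      have hr2 : r ^ 2 ≤ m ^ 2 := pow_le_pow_left₀ hr.1 hr.2 2
      convert exp_mul_sqrt_sq_add_sq_le (r := r) (c := t * ρ) hp.le hR hρ (by nlinarith) using 4
      ring
    _ ≤ ρ * exp (-(p * t / (2 * R) * ρ)) * exp (p * R) := by
      rw [← mul_assoc]; gcongr; linarith
    _ ≤ _ := by gcongr; exact (mul_exp_neg_mul_le_inv (by positivity) ρ).trans_eq (inv_div _ _)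
  have hlast : ∫ r in m..ρ, exp (p * √(r ^ 2 + a ^ 2)) ≤ t * exp (p * R) := calc
    _ ≤ (ρ - m) * exp (p * R) := integral_le_mul_of_forall_le (by linarith) (hint _ _)
          fun r hr => hle_exp r ⟨by linarith [hr.1], hr.2⟩
    _ = t * exp (p * R) := by rw [hm, sub_sub_cancel]
  linarith

/-- For `p > 0` and `ε ∈ (0,1]` there is `C_ε > 0` (depending only on `p, ε`)
such that for all `R > 0` and `|a| ≤ R`, with `ρ := √(R² - a²)`,
`∫_0^ρ e^{p√(r² + a²)} dr ≤ (2ε² R + C_ε) e^{pR}`. -/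
theorem statement6 (p ε : ℝ) (hp : 0 < p) (hε : ε ∈ Set.Ioc (0 : ℝ) 1) :
    ∃ Cε : ℝ, 0 < Cε ∧ ∀ R a : ℝ, 0 < R → |a| ≤ R →
      ∫ r in (0 : ℝ)..(Real.sqrt (R ^ 2 - a ^ 2)), Real.exp (p * Real.sqrt (r ^ 2 + a ^ 2))
        ≤ (2 * ε ^ 2 * R + Cε) * Real.exp (p * R) := by
  have hε0 : 0 < ε := hε.1
  refine ⟨2 / (p * ε ^ 2), by positivity, fun R a hR ha => ?_⟩
  have hsplit : 0 < ε ^ 2 * R := by positivity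
  calc _ ≤ (ε ^ 2 * R + 2 * R / (p * (ε ^ 2 * R))) * exp (p * R) :=
        integral_exp_mul_sqrt_sq_add_sq_le hp hR ha hsplit
    _ = (ε ^ 2 * R + 2 / (p * ε ^ 2)) * exp (p * R) := by field_simp
    _ ≤ _ := by gcongr; linarith [pow_pos hε0 2]
end

section
/- Let n ≥ 3 be an integer and p > 1. There exists a constant C = C(n, p) > 0 such that for every R > 0 and every x₀ ∈ ℝ^n, ∫_{B_R(x₀) ∩ {x_n = 0}} e^{p(|x − x₀| − R)} dH^{n−1}(x) ≤ C R^{n−2}. -/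
/-!
Identify the hyperplane `{xₙ = 0}` isometrically with `ℝⁿ⁻¹`; then `H^{n-1}` on it becomes the
additive Haar measure `H^{n-1}` of `ℝⁿ⁻¹`. Let `c` be the projection of `x₀` onto `ℝⁿ⁻¹` and
`r² = R² - x₀ₙ²`. By Pythagoras `|x - x₀|² - R² = |y - c|² - r²` for `x` in the slice, and
`d - R ≤ (d² - R²) / (2R)`, so the integrand is at most `exp (p (|y - c|² - r²) / (2R))` on
`B_r(c)`. In polar coordinates `t^{n-2} ≤ r^{n-3} t`, and `t exp (a t²)` has an explicit
primitive, which gives the bound `(n - 1) |B₁| r^{n-3} R / p ≤ C R^{n-2}`.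
-/

open MeasureTheory Set Metric

theorem Isometry.setIntegral_hausdorffMeasure {X Y E : Type*} [EMetricSpace X] [CompleteSpace X]
    [MeasurableSpace X] [BorelSpace X] [EMetricSpace Y] [MeasurableSpace Y] [BorelSpace Y]
    [NormedAddCommGroup E] [NormedSpace ℝ E] {f : X → Y} (hf : Isometry f) {d : ℝ} (hd : 0 ≤ d)
    {s : Set Y} (hs : s ⊆ range f) (g : Y → E) :
    ∫ y in s, g y ∂μH[d] = ∫ x in f ⁻¹' s, g (f x) ∂μH[d] := by
  rw [← Measure.restrict_restrict_of_subset hs, ← hf.map_hausdorffMeasure (.inl hd),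
    hf.isClosedEmbedding.measurableEmbedding.setIntegral_map]

theorem setIntegral_Ioo_pow_mul_exp_sq_sub_le {a r : ℝ} (ha : 0 < a) (hr : 0 ≤ r) (k : ℕ) :
    ∫ t in Ioo 0 r, t ^ (k + 1) * Real.exp (a * (t ^ 2 - r ^ 2)) ≤ r ^ k / (2 * a) := by
  have hcont : Continuous fun t => t * Real.exp (a * (t ^ 2 - r ^ 2)) := by fun_prop
  have hint : ∀ c : ℝ → ℝ, Continuous c →
      IntegrableOn (fun t => c t * (t * Real.exp (a * (t ^ 2 - r ^ 2)))) (Ioo 0 r) := fun c hc =>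
    ((hc.mul hcont).continuousOn.integrableOn_compact isCompact_Icc).mono_set Ioo_subset_Icc_self
  have hderiv : ∀ t, HasDerivAt (fun t => Real.exp (a * (t ^ 2 - r ^ 2)) / (2 * a))
      (t * Real.exp (a * (t ^ 2 - r ^ 2))) t := fun t => by
    refine ((((hasDerivAt_pow 2 t).sub_const (r ^ 2)).const_mul a).exp.div_const (2 * a)
      ).congr_deriv ?_
    norm_num
    field_simp
  calc ∫ t in Ioo 0 r, t ^ (k + 1) * Real.exp (a * (t ^ 2 - r ^ 2))
      = ∫ t in Ioo 0 r, t ^ k * (t * Real.exp (a * (t ^ 2 - r ^ 2))) := by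
        simp_rw [pow_succ, mul_assoc]
    _ ≤ ∫ t in Ioo 0 r, r ^ k * (t * Real.exp (a * (t ^ 2 - r ^ 2))) := by
        refine setIntegral_mono_on (hint _ (by fun_prop)) (hint _ (by fun_prop))
          measurableSet_Ioo fun t ht => ?_
        exact mul_le_mul_of_nonneg_right (pow_le_pow_left₀ ht.1.le ht.2.le k)
          (mul_nonneg ht.1.le (Real.exp_pos _).le)
    _ = r ^ k * (1 / (2 * a) - Real.exp (a * (0 ^ 2 - r ^ 2)) / (2 * a)) := by
        rw [integral_const_mul, ← integral_Ioc_eq_integral_Ioo,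
          ← intervalIntegral.integral_of_le hr,
          intervalIntegral.integral_eq_sub_of_hasDerivAt (fun t _ => hderiv t)
            (hcont.intervalIntegrable 0 r), sub_self, mul_zero, Real.exp_zero]
    _ ≤ r ^ k * (1 / (2 * a)) := by
        gcongr
        exact sub_le_self _ (by positivity)
    _ = r ^ k / (2 * a) := mul_one_div _ _

section Radial

variable {E : Type*} [NormedAddCommGroup E] [NormedSpace ℝ E] [FiniteDimensional ℝ E]
  [MeasurableSpace E] [BorelSpace E] (μ : Measure E) [μ.IsAddHaarMeasure]

theorem setIntegral_ball_exp_mul_dist_sq_sub_le (hE : 2 ≤ Module.finrank ℝ E) {a r : ℝ}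
    (ha : 0 < a) (hr : 0 ≤ r) (x : E) :
    ∫ y in ball x r, Real.exp (a * (dist y x ^ 2 - r ^ 2)) ∂μ
      ≤ Module.finrank ℝ E * μ.real (ball 0 1) * (r ^ (Module.finrank ℝ E - 2) / (2 * a)) := by
  have : Nontrivial E := Module.nontrivial_of_finrank_pos (R := ℝ) (by omega)
  set F : ℝ → ℝ := (Iio r).indicator fun t => Real.exp (a * (t ^ 2 - r ^ 2))
  have hF : ∀ y, (ball x r).indicator (fun y => Real.exp (a * (dist y x ^ 2 - r ^ 2))) y
      = F ‖y - x‖ :=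
    fun y => by simp [F, indicator, dist_eq_norm]
  have hpow : Module.finrank ℝ E - 1 = Module.finrank ℝ E - 2 + 1 := by omega
  have hradial : ∫ t in Ioi 0, t ^ (Module.finrank ℝ E - 1) • F t
      = ∫ t in Ioo 0 r, t ^ (Module.finrank ℝ E - 2 + 1) * Real.exp (a * (t ^ 2 - r ^ 2)) := by
    have : ∀ t, t ^ (Module.finrank ℝ E - 1) • F t = (Iio r).indicator
        (fun t => t ^ (Module.finrank ℝ E - 2 + 1) * Real.exp (a * (t ^ 2 - r ^ 2))) t :=
      fun t => by simp only [F, smul_eq_mul, indicator_mul_right, hpow]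
    simp_rw [this]
    rw [setIntegral_indicator measurableSet_Iio, Ioi_inter_Iio]
  rw [← integral_indicator measurableSet_ball, funext hF,
    integral_sub_right_eq_self (fun y => F ‖y‖), integral_fun_norm_addHaar, hradial,
    nsmul_eq_mul, smul_eq_mul, ← mul_assoc]
  gcongr
  exact setIntegral_Ioo_pow_mul_exp_sq_sub_le ha hr _

end Radial

section Hyperplane

variable (m : ℕ)

noncomputable def hyperplaneEmbedding (y : EuclideanSpace ℝ (Fin m)) :
    EuclideanSpace ℝ (Fin (m + 1)) :=
  WithLp.toLp 2 (Fin.snoc y.ofLp 0)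

noncomputable def hyperplaneProjection (x : EuclideanSpace ℝ (Fin (m + 1))) :
    EuclideanSpace ℝ (Fin m) :=
  WithLp.toLp 2 (Fin.init x.ofLp)

variable {m}

theorem dist_hyperplaneEmbedding_sq (y : EuclideanSpace ℝ (Fin m))
    (x : EuclideanSpace ℝ (Fin (m + 1))) :
    dist (hyperplaneEmbedding m y) x ^ 2
      = dist y (hyperplaneProjection m x) ^ 2 + x (Fin.last m) ^ 2 := by
  rw [EuclideanSpace.dist_eq, EuclideanSpace.dist_eq, Real.sq_sqrt (by positivity),
    Real.sq_sqrt (by positivity), Fin.sum_univ_castSucc]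
  simp [hyperplaneEmbedding, hyperplaneProjection, Fin.init, Real.dist_eq, sq_abs]

variable (m)

theorem isometry_hyperplaneEmbedding : Isometry (hyperplaneEmbedding m) := by
  refine Isometry.of_dist_eq fun y z => ?_
  simpa [hyperplaneEmbedding, hyperplaneProjection, sq_eq_sq₀, dist_nonneg] using
    dist_hyperplaneEmbedding_sq y (hyperplaneEmbedding m z)

theorem range_hyperplaneEmbedding :
    range (hyperplaneEmbedding m) = {x : EuclideanSpace ℝ (Fin (m + 1)) | x (Fin.last m) = 0} := by
  ext x
  constructor
  · rintro ⟨y, rfl⟩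
    simp [hyperplaneEmbedding]
  · intro hx
    refine ⟨hyperplaneProjection m x, PiLp.ext fun i => ?_⟩
    refine Fin.lastCases ?_ (fun j => ?_) i
    · simpa [hyperplaneEmbedding] using hx.symm
    · simp [hyperplaneEmbedding, hyperplaneProjection, Fin.init]

variable {m}

theorem dist_hyperplaneProjection_lt {R : ℝ} {y : EuclideanSpace ℝ (Fin m)}
    {x : EuclideanSpace ℝ (Fin (m + 1))} (h : dist (hyperplaneEmbedding m y) x < R) :
    dist y (hyperplaneProjection m x) < √(R ^ 2 - x (Fin.last m) ^ 2) := by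
  have := dist_hyperplaneEmbedding_sq y x
  exact (Real.lt_sqrt dist_nonneg).2
    (by nlinarith [dist_nonneg (x := hyperplaneEmbedding m y) (y := x)])

theorem dist_hyperplaneEmbedding_sub_le {R : ℝ} (hR : 0 < R) (y : EuclideanSpace ℝ (Fin m))
    (x : EuclideanSpace ℝ (Fin (m + 1))) :
    dist (hyperplaneEmbedding m y) x - R
      ≤ (dist y (hyperplaneProjection m x) ^ 2 - (R ^ 2 - x (Fin.last m) ^ 2)) / (2 * R) := by
  have := dist_hyperplaneEmbedding_sq y x
  rw [le_div_iff₀ (by positivity)]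
  nlinarith [sq_nonneg (dist (hyperplaneEmbedding m y) x - R)]

theorem setIntegral_hyperplane_exp_dist_sub_le {p R : ℝ} (hp : 0 ≤ p) (hR : 0 < R)
    (x : EuclideanSpace ℝ (Fin (m + 1))) :
    ∫ z in ball x R ∩ {z : EuclideanSpace ℝ (Fin (m + 1)) | z (Fin.last m) = 0},
        Real.exp (p * (dist z x - R)) ∂μH[m]
      ≤ ∫ y in ball (hyperplaneProjection m x) √(R ^ 2 - x (Fin.last m) ^ 2),
        Real.exp (p / (2 * R) * (dist y (hyperplaneProjection m x) ^ 2
          - √(R ^ 2 - x (Fin.last m) ^ 2) ^ 2)) ∂μH[m] := by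
  set ι := hyperplaneEmbedding m
  set S := ball x R ∩ {z : EuclideanSpace ℝ (Fin (m + 1)) | z (Fin.last m) = 0}
  set c := hyperplaneProjection m x
  set r := √(R ^ 2 - x (Fin.last m) ^ 2)
  have hι := isometry_hyperplaneEmbedding m
  have hιc : Continuous ι := hι.continuous
  have hS : MeasurableSet (ι ⁻¹' S) :=
    (measurableSet_ball.inter (measurableSet_eq_fun (by fun_prop) measurable_const)).preimage
      hιc.measurable
  have hball : ι ⁻¹' S ⊆ ball c r := fun y hy => dist_hyperplaneProjection_lt hy.1
  have hint : ∀ s ⊆ ball c r, ∀ g : EuclideanSpace ℝ (Fin m) → ℝ, Continuous g →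
      IntegrableOn g s μH[m] := fun s hs g hg =>
    (hg.continuousOn.integrableOn_compact (isCompact_closedBall c r)).mono_set
      (hs.trans ball_subset_closedBall)
  have hexp : ∀ y ∈ ι ⁻¹' S, Real.exp (p * (dist (ι y) x - R))
      ≤ Real.exp (p / (2 * R) * (dist y c ^ 2 - r ^ 2)) := fun y hy => by
    -- `0 < r` on a nonempty slice, so the square root is not truncated at `0`.
    have hr : r ^ 2 = R ^ 2 - x (Fin.last m) ^ 2 :=
      Real.sq_sqrt (Real.sqrt_pos.1 (dist_nonneg.trans_lt (hball hy))).le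
    rw [Real.exp_le_exp, hr, div_mul_eq_mul_div, mul_div_assoc]
    exact mul_le_mul_of_nonneg_left (dist_hyperplaneEmbedding_sub_le hR y x) hp
  calc ∫ z in S, Real.exp (p * (dist z x - R)) ∂μH[m]
      = ∫ y in ι ⁻¹' S, Real.exp (p * (dist (ι y) x - R)) ∂μH[m] :=
        hι.setIntegral_hausdorffMeasure m.cast_nonneg
          ((range_hyperplaneEmbedding m).symm ▸ inter_subset_right) _
    _ ≤ ∫ y in ι ⁻¹' S, Real.exp (p / (2 * R) * (dist y c ^ 2 - r ^ 2)) ∂μH[m] :=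
        setIntegral_mono_on (hint _ hball _ (by fun_prop)) (hint _ hball _ (by fun_prop)) hS
          hexp
    _ ≤ ∫ y in ball c r, Real.exp (p / (2 * R) * (dist y c ^ 2 - r ^ 2)) ∂μH[m] :=
        setIntegral_mono_set (hint _ subset_rfl _ (by fun_prop))
          (.of_forall fun _ => (Real.exp_pos _).le) hball.eventuallyLE

end Hyperplane

/-- For `n ≥ 3` and `p > 1` there is `C = C(n,p) > 0` such that for every
`R > 0` and `x₀ ∈ ℝⁿ`, `∫_{B_R(x₀) ∩ {xₙ = 0}} e^{p(|x - x₀| - R)} dH^{n-1}(x) ≤ C R^{n-2}`. -/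
theorem statement11 (n : ℕ) (hn : 3 ≤ n) (p : ℝ) (hp : 1 < p) :
    ∃ C : ℝ, 0 < C ∧ ∀ R : ℝ, 0 < R → ∀ x₀ : EuclideanSpace ℝ (Fin n),
      ∫ x in ball x₀ R ∩ {x : EuclideanSpace ℝ (Fin n) | x ⟨n - 1, by omega⟩ = 0},
          Real.exp (p * (dist x x₀ - R)) ∂(μH[(n - 1 : ℕ)])
        ≤ C * R ^ (n - 2) := by
  obtain ⟨m, rfl⟩ : ∃ m, n = m + 1 := ⟨n - 1, by omega⟩
  have hp0 : 0 < p := zero_lt_one.trans hp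
  set V := (μH[m] : Measure (EuclideanSpace ℝ (Fin m))).real (ball 0 1)
  refine ⟨m * V / p + 1, by positivity, fun R hR x₀ => ?_⟩
  set r := √(R ^ 2 - x₀ (Fin.last m) ^ 2)
  calc _ ≤ _ := setIntegral_hyperplane_exp_dist_sub_le hp0.le hR x₀
    _ ≤ m * V * (r ^ (m - 2) / (2 * (p / (2 * R)))) := by
        simpa using setIntegral_ball_exp_mul_dist_sq_sub_le μH[m]
          (by simp; omega) (by positivity) (Real.sqrt_nonneg _) (hyperplaneProjection m x₀)
    _ = m * V / p * r ^ (m - 2) * R := by field_simp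
    _ ≤ m * V / p * R ^ (m - 2) * R := by
        gcongr
        exact Real.sqrt_le_iff.2 ⟨hR.le, by nlinarith⟩
    _ ≤ (m * V / p + 1) * R ^ (m + 1 - 2) := by
        rw [show m + 1 - 2 = m - 2 + 1 by omega, pow_succ, add_mul, one_mul, mul_assoc]
        exact le_add_of_nonneg_right (by positivity)
end
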